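/- arXiv:2505.11034 — 3 statements merged into one kernel-verified Lean document; each statement's English description precedes it below -/
import Mathlib

section
/- Under the Fast Cleaning assumption, if a sample i has no near duplicates, then for every j, the pair {i, n(j)} being in the set of nearest-neighbor pairs never yields a near-duplicate pair containing i; equivalently, a sample not appearing in any positively annotated nearest-neighbor pair has no near duplicates. Formally: if for all j ≠ i, i ≁ j, then for all j, neither {j, n(j)} with j = i nor any pair is a near duplicate involving i. -/
/-- Under Fast Cleaning, a sample that appears in no positively annotated
nearest-neighbor pair has no near duplicates. -/
theorem not_in_positive_pairs_no_duplicates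
    {D : Type} [Fintype D] (h2 : 2 ≤ Fintype.card D)
    (sim : D → D → Prop) (hsymm : Symmetric sim) (hirr : Irreflexive sim)
    (d : D → D → ℝ) (hdsymm : ∀ i j, d i j = d j i)
    (hdistinct : ∀ i j k l : D, i ≠ j → k ≠ l → s(i, j) ≠ s(k, l) → d i j ≠ d k l)
    (hfast : ∀ i j k : D, sim i j → k ≠ i → ¬ sim i k → d i j < d i k)
    (n : D → D) (hn_ne : ∀ i, n i ≠ i)
    (hn_min : ∀ i k, k ≠ i → d i (n i) ≤ d i k)
    (i : D)
    (hnotin : ∀ j : D, sim j (n j) → i ≠ j ∧ i ≠ n j) :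
    ∀ j : D, ¬ sim i j := by
  intro j hij
  have hji : j ≠ i := fun h => hirr i (h ▸ hij)
  have hsin : sim i (n i) := by
    by_contra hns
    exact absurd (hn_min i j hji) (not_le.mpr (hfast i j (n i) hij (hn_ne i) hns))
  exact (hnotin i hsin).1 rfl
end

section
/- Every connected component of the undirected nearest-neighbor graph contains exactly one mutually-nearest pair, and hence the number of connected components of the nearest-neighbor graph equals |D| minus the number of distinct undirected edges, i.e., |D| − |N| where N = { {i, n(i)} : i ∈ D }. -/
/-- The undirected nearest-neighbor graph: `i` and `j` are adjacent iff they are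
distinct and one is the nearest neighbor of the other. -/
def nnGraph {D : Type} (n : D → D) : SimpleGraph D :=
  SimpleGraph.fromRel (fun i j => n i = j)

/-- Every connected component of the nearest-neighbor graph contains
exactly one mutually-nearest pair, hence the number of connected components equals
`|D| − |N|` where `N` is the set of undirected nearest-neighbor edges. -/
theorem nn_graph_components_count
    {D : Type} [Fintype D] [DecidableEq D] (h2 : 2 ≤ Fintype.card D)
    (d : D → D → ℝ) (hdsymm : ∀ i j, d i j = d j i)
    (hdistinct : ∀ i j k l : D, i ≠ j → k ≠ l → s(i, j) ≠ s(k, l) → d i j ≠ d k l)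
    (n : D → D) (hn_ne : ∀ i, n i ≠ i)
    (hn_min : ∀ i k, k ≠ i → d i (n i) ≤ d i k) :
    (∀ c : (nnGraph n).ConnectedComponent,
        ∃! e : Sym2 D, ∃ i j : D, e = s(i, j) ∧ n i = j ∧ n j = i ∧
          (nnGraph n).connectedComponentMk i = c) ∧
    Nat.card (nnGraph n).ConnectedComponent =
      Fintype.card D - (nnGraph n).edgeSet.ncard := by
  classical
  -- basic adjacency facts
  have hadj : ∀ i, (nnGraph n).Adj i (n i) := by
    intro i
    simp only [nnGraph, SimpleGraph.fromRel_adj]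
    exact ⟨(hn_ne i).symm, Or.inl trivial⟩
  -- descent relation
  set r : D → D → Prop := fun a b => d a (n a) < d b (n b) with hr
  have hwf : WellFounded r :=
    @Finite.wellFounded_of_trans_of_irrefl D _ r
      ⟨fun a b c h1 h2 => h1.trans h2⟩ ⟨fun a h => lt_irrefl _ h⟩
  have hdec : ∀ i, n (n i) ≠ i → r (n i) i := by
    intro i h
    have hle : d (n i) (n (n i)) ≤ d (n i) i := hn_min (n i) i (hn_ne i).symm
    have hne : d (n i) (n (n i)) ≠ d (n i) i := by
      apply hdistinct _ _ _ _ (hn_ne (n i)).symm (hn_ne i)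
      intro hs
      rcases Sym2.eq_iff.mp hs with ⟨_, h2⟩ | ⟨h1, _⟩
      · exact h h2
      · exact hn_ne i h1
    have := lt_of_le_of_ne hle hne
    simpa [hr, hdsymm i (n i)] using this
  -- the "first mutual pair on the trajectory" function
  let F : D → Sym2 D := WellFounded.fix hwf
    (fun i IH => if h : n (n i) = i then s(i, n i) else IH (n i) (hdec i h))
  have hFeq : ∀ i, F i = if h : n (n i) = i then s(i, n i) else F (n i) := by
    intro i
    exact WellFounded.fix_eq hwf _ i
  have hstep : ∀ i, n (n i) = i → F i = s(i, n i) := by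
    intro i h; rw [hFeq i, dif_pos h]
  have hstep2 : ∀ i, n (n i) ≠ i → F i = F (n i) := by
    intro i h; rw [hFeq i, dif_neg h]
  have key : ∀ a b, n a = b → F a = F b := by
    intro a b hab
    subst hab
    by_cases h : n (n a) = a
    · have h' : n (n (n a)) = n a := by rw [h]
      rw [hstep a h, hstep (n a) h', h]
      exact Sym2.eq_swap
    · exact hstep2 a h
  have P4 : ∀ a b, (nnGraph n).Adj a b → F a = F b := by
    intro a b hab
    simp only [nnGraph, SimpleGraph.fromRel_adj] at hab
    rcases hab.2 with h | h
    · exact key a b h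
    · exact (key b a h).symm
  have P5 : ∀ a b, (nnGraph n).Reachable a b → F a = F b := by
    intro a b hab
    obtain ⟨w⟩ := hab
    induction w with
    | nil => rfl
    | cons h p ih => exact (P4 _ _ h).trans ih
  -- every point reaches a mutual pair
  have P3 : ∀ i : D, ∃ j, (nnGraph n).Reachable i j ∧ n (n j) = j ∧ F i = s(j, n j) := by
    intro i
    induction i using WellFounded.induction hwf with
    | _ i IH =>
      by_cases h : n (n i) = i
      · exact ⟨i, SimpleGraph.Reachable.refl i, h, hstep i h⟩
      · obtain ⟨j, hrj, hmj, hej⟩ := IH (n i) (hdec i h)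
        exact ⟨j, (hadj i).reachable.trans hrj, hmj, (hstep2 i h).trans hej⟩
  -- lift F to components
  let G : (nnGraph n).ConnectedComponent → Sym2 D :=
    SimpleGraph.ConnectedComponent.lift F (fun v w p _ => P5 v w ⟨p⟩)
  have hGmk : ∀ i, G ((nnGraph n).connectedComponentMk i) = F i := fun i => rfl
  have hGmk' : ∀ i, G (Quot.mk (nnGraph n).Reachable i) = F i := fun i => rfl
  -- existence and uniqueness of mutual pairs in each component
  have main : ∀ c : (nnGraph n).ConnectedComponent,
      ∃! e : Sym2 D, ∃ i j : D, e = s(i, j) ∧ n i = j ∧ n j = i ∧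
        (nnGraph n).connectedComponentMk i = c := by
    intro c
    obtain ⟨v, hv⟩ := c.exists_rep
    obtain ⟨j, hrj, hmj, hej⟩ := P3 v
    refine ⟨s(j, n j), ⟨j, n j, rfl, rfl, hmj, ?_⟩, ?_⟩
    · rw [← hv]
      exact (SimpleGraph.ConnectedComponent.sound hrj.symm)
    · rintro e ⟨a, b, rfl, hab, hba, hac⟩
      have h1 : n (n a) = a := by rw [hab, hba]
      have hFa : F a = s(a, b) := by rw [hstep a h1, hab]
      have hreach : (nnGraph n).Reachable a v := by
        rw [← hv] at hac
        exact (SimpleGraph.ConnectedComponent.exact hac)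
      calc s(a, b) = F a := hFa.symm
        _ = F v := P5 a v hreach
        _ = s(j, n j) := hej
  -- the finsets of edges and mutual pairs
  let E : Finset (Sym2 D) := Finset.image (fun i => s(i, n i)) Finset.univ
  let M : Finset (Sym2 D) :=
    Finset.image (fun i => s(i, n i)) (Finset.univ.filter fun i => n (n i) = i)
  have hMsubE : M ⊆ E := Finset.image_subset_image (Finset.subset_univ _)
  -- edge set equals E
  have hedge : (nnGraph n).edgeSet = ↑E := by
    ext e
    induction e using Sym2.ind with
    | _ a b =>
      simp only [SimpleGraph.mem_edgeSet, Finset.coe_image, Finset.coe_univ, Set.image_univ,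
        Set.mem_range, E]
      constructor
      · intro hab
        simp only [nnGraph, SimpleGraph.fromRel_adj] at hab
        rcases hab.2 with h | h
        · exact ⟨a, by rw [h]⟩
        · exact ⟨b, by rw [h]; exact Sym2.eq_swap⟩
      · rintro ⟨i, hi⟩
        have := hadj i
        rwa [← SimpleGraph.mem_edgeSet, hi, SimpleGraph.mem_edgeSet] at this
  -- fiber sizes
  have hfiber : ∀ i : D, (Finset.univ.filter fun k => s(k, n k) = s(i, n i)).card
      = 1 + if s(i, n i) ∈ M then 1 else 0 := by
    intro i
    by_cases hm : n (n i) = i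
    · have hMem : s(i, n i) ∈ M :=
        Finset.mem_image.mpr ⟨i, Finset.mem_filter.mpr ⟨Finset.mem_univ _, hm⟩, rfl⟩
      have hset : (Finset.univ.filter fun k => s(k, n k) = s(i, n i)) = {i, n i} := by
        ext k
        simp only [Finset.mem_filter, Finset.mem_univ, true_and, Finset.mem_insert,
          Finset.mem_singleton, Sym2.eq_iff]
        constructor
        · rintro (⟨h1, _⟩ | ⟨h1, _⟩)
          · exact Or.inl h1
          · exact Or.inr h1
        · rintro (rfl | rfl)
          · exact Or.inl ⟨rfl, rfl⟩
          · exact Or.inr ⟨rfl, hm⟩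
      rw [hset, if_pos hMem]
      rw [Finset.card_insert_of_notMem (by simp [(hn_ne i).symm]), Finset.card_singleton]
    · have hMem : s(i, n i) ∉ M := by
        intro hMem
        obtain ⟨k, hk, hke⟩ := Finset.mem_image.mp hMem
        have hkm := (Finset.mem_filter.mp hk).2
        rcases Sym2.eq_iff.mp hke with ⟨h1, _⟩ | ⟨h1, h2⟩
        · subst h1; exact hm hkm
        · rw [h1] at h2; exact hm h2
      have hset : (Finset.univ.filter fun k => s(k, n k) = s(i, n i)) = {i} := by
        ext k
        simp only [Finset.mem_filter, Finset.mem_univ, true_and, Finset.mem_singleton,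
          Sym2.eq_iff]
        constructor
        · rintro (⟨h1, _⟩ | ⟨h1, h2⟩)
          · exact h1
          · rw [h1] at h2; exact absurd h2 hm
        · rintro rfl; exact Or.inl ⟨rfl, rfl⟩
      rw [hset, if_neg hMem, Finset.card_singleton]
  -- counting: |D| = |E| + |M|
  have hcount : Fintype.card D = E.card + M.card := by
    have h1 : Fintype.card D = ∑ e ∈ E, (Finset.univ.filter fun k => s(k, n k) = e).card := by
      rw [← Finset.card_univ]
      exact Finset.card_eq_sum_card_image _ _
    rw [h1]
    have h2 : ∀ e ∈ E, (Finset.univ.filter fun k => s(k, n k) = e).card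
        = 1 + if e ∈ M then 1 else 0 := by
      intro e he
      obtain ⟨i, _, rfl⟩ := Finset.mem_image.mp he
      exact hfiber i
    rw [Finset.sum_congr rfl h2, Finset.sum_add_distrib, Finset.sum_const, smul_eq_mul, mul_one]
    congr 1
    rw [Finset.sum_boole]
    norm_cast
    congr 1
    ext e
    simp only [Finset.mem_filter]
    exact ⟨fun h => h.2, fun h => ⟨hMsubE h, h⟩⟩
  -- bijection between components and M
  have hGmem : ∀ c : (nnGraph n).ConnectedComponent, G c ∈ M := by
    intro c
    obtain ⟨v, hv⟩ := c.exists_rep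
    obtain ⟨j, _, hmj, hej⟩ := P3 v
    rw [← hv, hGmk', hej]
    exact Finset.mem_image.mpr ⟨j, Finset.mem_filter.mpr ⟨Finset.mem_univ _, hmj⟩, rfl⟩
  let G' : (nnGraph n).ConnectedComponent → {e // e ∈ M} := fun c => ⟨G c, hGmem c⟩
  have hbij : Function.Bijective G' := by
    constructor
    · intro c₁ c₂ hcc
      have hGc : G c₁ = G c₂ := congrArg Subtype.val hcc
      obtain ⟨v₁, hv₁⟩ := c₁.exists_rep
      obtain ⟨v₂, hv₂⟩ := c₂.exists_rep
      obtain ⟨j₁, hr₁, hm₁, he₁⟩ := P3 v₁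
      obtain ⟨j₂, hr₂, hm₂, he₂⟩ := P3 v₂
      rw [← hv₁, ← hv₂, hGmk', hGmk', he₁, he₂] at hGc
      have hj : (nnGraph n).Reachable j₁ j₂ := by
        rcases Sym2.eq_iff.mp hGc with ⟨h1, _⟩ | ⟨h1, h2⟩
        · exact h1 ▸ SimpleGraph.Reachable.refl _
        · rw [← h2]
          exact (hadj j₁).reachable
      rw [← hv₁, ← hv₂]
      exact SimpleGraph.ConnectedComponent.sound (hr₁.trans (hj.trans hr₂.symm))
    · rintro ⟨e, he⟩
      obtain ⟨i, hi, rfl⟩ := Finset.mem_image.mp he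
      have hmi := (Finset.mem_filter.mp hi).2
      refine ⟨(nnGraph n).connectedComponentMk i, ?_⟩
      apply Subtype.ext
      simp only [G']
      rw [hGmk, hstep i hmi]
  have hcardM : Nat.card (nnGraph n).ConnectedComponent = M.card := by
    rw [Nat.card_eq_of_bijective G' hbij, Nat.card_eq_fintype_card, Fintype.card_coe]
  refine ⟨main, ?_⟩
  rw [hcardM, hedge, Set.ncard_coe_finset]
  omega
end

section
/- The undirected nearest-neighbor graph is a forest: it contains no cycles (of length ≥ 3), so each connected component is a tree. -/
/-!
Weight the edge `{i, j}` by `d i j`. The edge `{i, n i}` is strictly lighter than every other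
edge at `i`. On a cycle, the heaviest edge is some `{i, n i}`, and the second cycle edge at `i`
would be both strictly heavier and no heavier than it.
-/

namespace SimpleGraph

variable {V : Type*} {G : SimpleGraph V}

lemma Walk.IsCycle.exists_mem_edges_ne {u v w : V} {c : G.Walk u u} (hc : c.IsCycle)
    (hvw : s(v, w) ∈ c.edges) : ∃ x, x ≠ w ∧ s(v, x) ∈ c.edges := by
  have hcard := hc.ncard_neighborSet_toSubgraph_eq_two (c.fst_mem_support_of_mem_edges hvw)
  obtain ⟨x, hx, hxw⟩ := Set.exists_ne_of_one_lt_ncard (hcard ▸ one_lt_two) w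
  exact ⟨x, hxw, Walk.adj_toSubgraph_iff_mem_edges.mp hx⟩

theorem isAcyclic_of_forall_edge_lt_at_endpoint {α : Type*} [LinearOrder α] (wt : Sym2 V → α)
    (h : ∀ e ∈ G.edgeSet, ∃ a ∈ e, ∀ x, G.Adj a x → s(a, x) ≠ e → wt e < wt s(a, x)) :
    G.IsAcyclic := by
  classical
  intro u c hc
  have hne : c.edges.toFinset.Nonempty :=
    List.toFinset_nonempty_iff _ |>.mpr (Walk.edges_eq_nil.not.mpr hc.not_nil)
  obtain ⟨e, he, hmax⟩ := c.edges.toFinset.exists_max_image wt hne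
  rw [List.mem_toFinset] at he
  obtain ⟨a, ha, hlt⟩ := h e (c.edges_subset_edgeSet he)
  obtain ⟨b, rfl⟩ := Sym2.mem_iff_exists.mp ha
  obtain ⟨x, hxb, hx⟩ := hc.exists_mem_edges_ne he
  exact (hlt x (c.adj_of_mem_edges hx) (mt Sym2.congr_right.mp hxb)).not_ge
    (hmax _ (List.mem_toFinset.mpr hx))

end SimpleGraph

lemma nearest_lt_of_ne {D α : Type*} [LinearOrder α] {d : D → D → α}
    (hdistinct : ∀ i j k l : D, i ≠ j → k ≠ l → s(i, j) ≠ s(k, l) → d i j ≠ d k l)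
    {n : D → D} (hn_min : ∀ i k, k ≠ i → d i (n i) ≤ d i k) {i k : D} (hi : n i ≠ i)
    (hk : k ≠ i) (hne : s(i, k) ≠ s(i, n i)) : d i (n i) < d i k :=
  (hn_min i k hk).lt_of_ne (hdistinct i (n i) i k hi.symm hk.symm hne.symm)

theorem nn_graph_is_forest_general
    {D : Type}
    (d : D → D → ℝ) (hdsymm : ∀ i j, d i j = d j i)
    (hdistinct : ∀ i j k l : D, i ≠ j → k ≠ l → s(i, j) ≠ s(k, l) → d i j ≠ d k l)
    (n : D → D)
    (hn_min : ∀ i k, k ≠ i → d i (n i) ≤ d i k) :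
    (nnGraph n).IsAcyclic := by
  refine SimpleGraph.isAcyclic_of_forall_edge_lt_at_endpoint (Sym2.lift ⟨d, hdsymm⟩) ?_
  intro e he
  induction e using Sym2.ind with | _ v w => ?_
  obtain ⟨hvw, rfl | rfl⟩ : v ≠ w ∧ (n v = w ∨ n w = v) := he
  · exact ⟨v, Sym2.mem_mk_left _ _, fun x hx hne =>
      nearest_lt_of_ne hdistinct hn_min hvw.symm hx.ne.symm hne⟩
  · rw [Sym2.eq_swap]
    exact ⟨w, Sym2.mem_mk_left _ _, fun x hx hne =>
      nearest_lt_of_ne hdistinct hn_min hvw hx.ne.symm hne⟩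

/-- The undirected nearest-neighbor graph is a forest (acyclic). -/
theorem nn_graph_is_forest
    {D : Type} [Fintype D] (h2 : 2 ≤ Fintype.card D)
    (d : D → D → ℝ) (hdsymm : ∀ i j, d i j = d j i)
    (hdistinct : ∀ i j k l : D, i ≠ j → k ≠ l → s(i, j) ≠ s(k, l) → d i j ≠ d k l)
    (n : D → D) (hn_ne : ∀ i, n i ≠ i)
    (hn_min : ∀ i k, k ≠ i → d i (n i) ≤ d i k) :
    (nnGraph n).IsAcyclic :=
  nn_graph_is_forest_general d hdsymm hdistinct n hn_min
end
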